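/- arXiv:1205.4539 — 2 statements merged into one kernel-verified Lean document; each statement's English description precedes it below -/
import Mathlib

section
/- A bijection φ : X₁ → X₂ between quasi-metric spaces (X₁,d₁) and (X₂,d₂) preserves the triangular function (T₂(φ(x),φ(y),φ(z)) = T₁(x,y,z) for all x,y,z) if and only if there exists a function f : X₂ → ℝ such that d₂(φ(x),φ(y)) = d₁(x,y) + f(φ(y)) - f(φ(x)) for all x,y ∈ X₁. -/
/-- `d` is a quasi-metric: nonnegative, vanishing exactly on the diagonal,
and satisfying the triangle inequality (symmetry is not assumed). -/
def IsQuasiMetric {X : Type*} (d : X → X → ℝ) : Prop :=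
  (∀ x y, 0 ≤ d x y) ∧ (∀ x y, d x y = 0 ↔ x = y) ∧ (∀ x y z, d x z ≤ d x y + d y z)

/-- The triangular function `T(x,y,z) = d(x,y) + d(y,z) - d(x,z)`. -/
def triangular {X : Type*} (d : X → X → ℝ) (x y z : X) : ℝ := d x y + d y z - d x z

section Coboundary

variable {X : Type*} (d e : X → X → ℝ)

theorem triangular_add_coboundary (g : X → ℝ) (x y z : X) :
    triangular (fun a b => d a b + g b - g a) x y z = triangular d x y z := by
  simp only [triangular]
  ring

/-- The difference `e - d` has vanishing triangular function, so it is the coboundary of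
`g x = e x₀ x - d x₀ x`, read off from `T(x₀, x, y)`. -/
theorem exists_coboundary_of_triangular_eq [Nonempty X]
    (h : ∀ x y z, triangular e x y z = triangular d x y z) :
    ∃ g : X → ℝ, ∀ x y, e x y = d x y + g y - g x := by
  obtain ⟨x₀⟩ := ‹Nonempty X›
  refine ⟨fun x => e x₀ x - d x₀ x, fun x y => ?_⟩
  have h₀ := h x₀ x y
  simp only [triangular] at h₀
  linarith

theorem triangular_eq_iff_exists_coboundary [Nonempty X] :
    (∀ x y z, triangular e x y z = triangular d x y z) ↔
      ∃ g : X → ℝ, ∀ x y, e x y = d x y + g y - g x := by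
  refine ⟨exists_coboundary_of_triangular_eq d e, ?_⟩
  rintro ⟨g, hg⟩ x y z
  have he : e = fun a b => d a b + g b - g a := funext₂ hg
  rw [he, triangular_add_coboundary]

end Coboundary

theorem preserves_triangular_iff_exists_f_general {X₁ X₂ : Type*} [Nonempty X₁]
    (d₁ : X₁ → X₁ → ℝ) (d₂ : X₂ → X₂ → ℝ)
    (φ : X₁ ≃ X₂) :
    (∀ x y z : X₁, triangular d₂ (φ x) (φ y) (φ z) = triangular d₁ x y z) ↔
      ∃ f : X₂ → ℝ, ∀ x y : X₁, d₂ (φ x) (φ y) = d₁ x y + f (φ y) - f (φ x) := by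
  refine (triangular_eq_iff_exists_coboundary d₁ (fun x y => d₂ (φ x) (φ y))).trans ⟨?_, ?_⟩
  · rintro ⟨g, hg⟩
    exact ⟨g ∘ φ.symm, by simpa using hg⟩
  · rintro ⟨f, hf⟩
    exact ⟨f ∘ φ, hf⟩

/-- A bijection `φ : X₁ → X₂` between quasi-metric spaces preserves the triangular
function if and only if there exists `f : X₂ → ℝ` with
`d₂(φ(x),φ(y)) = d₁(x,y) + f(φ(y)) - f(φ(x))` for all `x, y`. -/
theorem preserves_triangular_iff_exists_f {X₁ X₂ : Type*} [Nonempty X₁]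
    (d₁ : X₁ → X₁ → ℝ) (d₂ : X₂ → X₂ → ℝ)
    (hd₁ : IsQuasiMetric d₁) (hd₂ : IsQuasiMetric d₂) (φ : X₁ ≃ X₂) :
    (∀ x y z : X₁, triangular d₂ (φ x) (φ y) (φ z) = triangular d₁ x y z) ↔
      ∃ f : X₂ → ℝ, ∀ x y : X₁, d₂ (φ x) (φ y) = d₁ x y + f (φ y) - f (φ x) :=
  preserves_triangular_iff_exists_f_general d₁ d₂ φ
end

section
/- If a quasi-metric space is finitely compact (B⁺(x,r) ∪ B⁻(x,r) is precompact for all x, r), then it is forward complete and backward complete: every forward Cauchy sequence and every backward Cauchy sequence converges in the symmetric topology. -/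
open Filter Topology

namespace QuasiMetric

variable {X : Type*} {d : X → X → ℝ} {u : ℕ → X} {x : X}

def IsForwardCauchy (d : X → X → ℝ) (u : ℕ → X) : Prop :=
  ∀ ε > (0 : ℝ), ∃ N : ℕ, ∀ n m : ℕ, N ≤ n → n < m → d (u n) (u m) < ε

def IsFinitelyCompact [TopologicalSpace X] (d : X → X → ℝ) : Prop :=
  ∀ x : X, ∀ r > (0 : ℝ), IsCompact (closure ({y : X | d x y < r} ∪ {y : X | d y x < r}))

theorem IsFinitelyCompact.flip [TopologicalSpace X] (hfc : IsFinitelyCompact d) :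
    IsFinitelyCompact (flip d) := fun x r hr => by
  rw [Set.union_comm]
  exact hfc x r hr

theorem IsForwardCauchy.exists_mapClusterPt [TopologicalSpace X] (hfc : IsFinitelyCompact d)
    (hu : IsForwardCauchy d u) : ∃ x, MapClusterPt x atTop u := by
  obtain ⟨N, hN⟩ := hu 1 one_pos
  have htail : ∀ᶠ n in atTop, u n ∈ closure ({y | d (u N) y < 1} ∪ {y | d y (u N) < 1}) :=
    eventually_atTop.2 ⟨N + 1, fun n hn => subset_closure (Or.inl (hN N n le_rfl hn))⟩
  obtain ⟨x, -, hx⟩ := (hfc (u N) 1 one_pos).exists_mapClusterPt_of_frequently htail.frequently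
  exact ⟨x, hx⟩

theorem IsForwardCauchy.eventually_lt_to_of_frequently
    (htri : ∀ x y z, d x z ≤ d x y + d y z) (hu : IsForwardCauchy d u)
    (hx : ∀ ε > 0, ∃ᶠ n in atTop, d (u n) x < ε) :
    ∀ ε > 0, ∀ᶠ n in atTop, d (u n) x < ε := by
  intro ε hε
  obtain ⟨N, hN⟩ := hu (ε / 2) (half_pos hε)
  refine eventually_atTop.2 ⟨N, fun n hn => ?_⟩
  obtain ⟨k, hnk, hk⟩ := frequently_atTop.1 (hx (ε / 2) (half_pos hε)) (n + 1)
  calc d (u n) x ≤ d (u n) (u k) + d (u k) x := htri _ _ _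
    _ < ε / 2 + ε / 2 := add_lt_add (hN n k hn hnk) hk
    _ = ε := add_halves ε

theorem IsForwardCauchy.eventually_lt_from_of_frequently
    (htri : ∀ x y z, d x z ≤ d x y + d y z) (hu : IsForwardCauchy d u)
    (hx : ∀ ε > 0, ∃ᶠ n in atTop, d x (u n) < ε) :
    ∀ ε > 0, ∀ᶠ n in atTop, d x (u n) < ε := by
  intro ε hε
  obtain ⟨N, hN⟩ := hu (ε / 2) (half_pos hε)
  obtain ⟨k, hNk, hk⟩ := frequently_atTop.1 (hx (ε / 2) (half_pos hε)) N
  refine eventually_atTop.2 ⟨k + 1, fun n hn => ?_⟩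
  calc d x (u n) ≤ d x (u k) + d (u k) (u n) := htri _ _ _
    _ < ε / 2 + ε / 2 := add_lt_add hk (hN k n hNk hn)
    _ = ε := add_halves ε

section Symmetrized

variable [PseudoMetricSpace X]

theorem lt_of_dist_lt_half (hnn : ∀ x y, 0 ≤ d x y)
    (hdist : ∀ x y : X, dist x y = (d x y + d y x) / 2) {y : X} {ε : ℝ}
    (h : dist x y < ε / 2) : d x y < ε := by
  rw [hdist] at h
  linarith [hnn y x]

theorem IsForwardCauchy.tendsto_of_mapClusterPt (hnn : ∀ x y, 0 ≤ d x y)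
    (htri : ∀ x y z, d x z ≤ d x y + d y z)
    (hdist : ∀ x y : X, dist x y = (d x y + d y x) / 2)
    (hu : IsForwardCauchy d u) (hx : MapClusterPt x atTop u) : Tendsto u atTop (𝓝 x) := by
  have hnear : ∀ ε > 0, ∃ᶠ n in atTop, d (u n) x < ε ∧ d x (u n) < ε := fun ε hε =>
    (hx.frequently (Metric.ball_mem_nhds x (half_pos hε))).mono fun n hn =>
      ⟨lt_of_dist_lt_half hnn hdist hn,
        lt_of_dist_lt_half hnn hdist (by rwa [dist_comm] at hn)⟩
  have hto := hu.eventually_lt_to_of_frequently htri fun ε hε =>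
    (hnear ε hε).mono fun _ h => h.1
  have hfrom := hu.eventually_lt_from_of_frequently htri fun ε hε =>
    (hnear ε hε).mono fun _ h => h.2
  refine Metric.tendsto_nhds.2 fun ε hε => ((hto ε hε).and (hfrom ε hε)).mono fun n h => ?_
  rw [hdist]
  linarith [h.1, h.2]

theorem IsForwardCauchy.exists_tendsto (hnn : ∀ x y, 0 ≤ d x y)
    (htri : ∀ x y z, d x z ≤ d x y + d y z)
    (hdist : ∀ x y : X, dist x y = (d x y + d y x) / 2) (hfc : IsFinitelyCompact d)
    (hu : IsForwardCauchy d u) : ∃ x, Tendsto u atTop (𝓝 x) :=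
  let ⟨x, hx⟩ := hu.exists_mapClusterPt hfc
  ⟨x, hu.tendsto_of_mapClusterPt hnn htri hdist hx⟩

end Symmetrized

end QuasiMetric

open QuasiMetric

/-- If a quasi-metric space is finitely compact (the sets `B⁺(x,r) ∪ B⁻(x,r)` are
precompact for the symmetric topology, realized as the topology of the symmetrized metric
`d̃(x,y) = ½(d(x,y)+d(y,x))`), then it is forward and backward complete: every forward
Cauchy sequence and every backward Cauchy sequence converges in the symmetric topology. -/
theorem forward_backward_complete_of_finitely_compact {X : Type*} [MetricSpace X]
    (d : X → X → ℝ) (hd : IsQuasiMetric d)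
    (hdist : ∀ x y : X, dist x y = (d x y + d y x) / 2)
    (hfc : ∀ x : X, ∀ r > (0:ℝ),
      IsCompact (closure ({y : X | d x y < r} ∪ {y : X | d y x < r}))) :
    (∀ u : ℕ → X,
        (∀ ε > (0:ℝ), ∃ N : ℕ, ∀ n m : ℕ, N ≤ n → n < m → d (u n) (u m) < ε) →
        ∃ x : X, Filter.Tendsto u Filter.atTop (nhds x)) ∧
    (∀ u : ℕ → X,
        (∀ ε > (0:ℝ), ∃ N : ℕ, ∀ n m : ℕ, N ≤ m → m < n → d (u n) (u m) < ε) →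
        ∃ x : X, Filter.Tendsto u Filter.atTop (nhds x)) := by
  obtain ⟨hnn, -, htri⟩ := hd
  have hnn' : ∀ x y, 0 ≤ flip d x y := fun x y => hnn y x
  have htri' : ∀ x y z, flip d x z ≤ flip d x y + flip d y z := fun x y z =>
    (htri z y x).trans_eq (add_comm _ _)
  have hdist' : ∀ x y : X, dist x y = (flip d x y + flip d y x) / 2 := fun x y => by
    rw [hdist, add_comm]
    rfl
  refine ⟨fun u hu => IsForwardCauchy.exists_tendsto hnn htri hdist hfc hu, fun u hu => ?_⟩
  have hu' : IsForwardCauchy (flip d) u := fun ε hε =>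
    (hu ε hε).imp fun _ hN n m hn hnm => hN m n hn hnm
  exact hu'.exists_tendsto hnn' htri' hdist' (IsFinitelyCompact.flip hfc)
end
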